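/- Let U : ℝ → ℝ be concave nondecreasing with U(0) = 0 and conjugate V(y) = sup_x(U(x) − xy), and let β be the left derivative of U at 0. Define Φ(y) = 0 for 0 ≤ y ≤ β and Φ(y) = V(y) − V(β) for y > β. If V is finite-valued and lim sup_{y→∞} V(2y)/V(y) < ∞ with V(y) > 0 for large y, then Φ is a Young function (convex, Φ(0) = 0, Φ(x)/x → ∞) of class Δ₂, i.e. lim sup_{x→∞} Φ(2x)/Φ(x) < ∞. -/
import Mathlib


open Filter Set

open Topology

/-- `Φ(y) = 0` for `y ≤ β` (β the left derivative of `U` at 0) and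
`Φ(y) = V(y) − V(β)` for `y > β` is a Young function of class Δ₂, given that `V` is
finite, eventually positive, and `limsup V(2y)/V(y) < ∞`. -/
theorem stmt10 (U : ℝ → ℝ) (hconc : ConcaveOn ℝ Set.univ U) (hmono : Monotone U)
    (hU0 : U 0 = 0)
    (hsl : Tendsto (fun x => U x / x) atBot atTop)
    (β : ℝ) (hβ : HasDerivWithinAt U β (Set.Iio 0) 0)
    (V : ℝ → ℝ)
    (hV : ∀ y > (0:ℝ), IsLUB (Set.range fun x => U x - x * y) (V y))
    (hVβ : IsLUB (Set.range fun x => U x - x * β) (V β))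
    (hVpos : ∃ y1, ∀ y ≥ y1, 0 < V y)
    (hΔ2V : ∃ C y2, ∀ y ≥ y2, V (2 * y) ≤ C * V y) :
    let Φ : ℝ → ℝ := fun y => if y ≤ β then 0 else V y - V β
    ConvexOn ℝ (Set.Ici 0) Φ ∧ Φ 0 = 0 ∧ (∀ y ≥ (0:ℝ), 0 ≤ Φ y) ∧
      Tendsto (fun y => Φ y / y) atTop atTop ∧
      ∃ C x0, ∀ x ≥ x0, Φ (2 * x) ≤ C * Φ x := by
  intro Φ
  -- slope limit
  have hslope : Tendsto (slope U 0) (𝓝[Set.Iio 0 \ {0}] 0) (𝓝 β) :=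
    hasDerivWithinAt_iff_tendsto_slope.1 hβ
  have hsetEq : (Set.Iio (0:ℝ) \ {0}) = Set.Iio 0 := by
    ext x; simp only [Set.mem_diff, Set.mem_Iio, Set.mem_singleton_iff]
    constructor
    · exact fun h => h.1
    · exact fun h => ⟨h, by linarith⟩
  rw [hsetEq] at hslope
  have hslope' : Tendsto (fun x => U x / x) (𝓝[Set.Iio 0] 0) (𝓝 β) := by
    refine hslope.congr' ?_
    filter_upwards [self_mem_nhdsWithin] with x hx
    simp [slope, hU0, div_eq_inv_mul]
  -- β ≥ 0
  have hβ0 : 0 ≤ β := by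
    refine ge_of_tendsto hslope' ?_
    filter_upwards [self_mem_nhdsWithin] with x (hx : x < 0)
    have hUx : U x ≤ 0 := hU0 ▸ hmono hx.le
    rw [div_nonneg_iff]
    exact Or.inr ⟨hUx, hx.le⟩
  -- slope antitone: for s ≤ t, s,t ≠ 0 : U t / t ≤ U s / s
  have hsec : ∀ s t : ℝ, s ≠ 0 → t ≠ 0 → s ≤ t → U t / t ≤ U s / s := by
    intro s t hs ht hst
    have := hconc.neg.secant_mono (a := 0) (x := s) (y := t)
      (Set.mem_univ _) (Set.mem_univ _) (Set.mem_univ _) hs ht hst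
    simp only [Pi.neg_apply, hU0, neg_zero, sub_zero] at this
    rw [neg_div, neg_div] at this
    linarith
  -- U t ≤ β * t for all t
  have hkey : ∀ t : ℝ, U t ≤ β * t := by
    intro t
    rcases lt_trichotomy t 0 with h | h | h
    · -- t < 0 : β ≤ U t / t
      have hle : β ≤ U t / t := by
        refine le_of_tendsto hslope' ?_
        have hmem : Set.Ioi t ∈ 𝓝[Set.Iio 0] (0:ℝ) :=
          nhdsWithin_le_nhds (Ioi_mem_nhds h)
        filter_upwards [self_mem_nhdsWithin, hmem] with x (hx : x < 0) (hx2 : t < x)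
        exact hsec t x (ne_of_lt h) (ne_of_lt hx) hx2.le
      calc U t = (U t / t) * t := (div_mul_cancel₀ (U t) (ne_of_lt h)).symm
        _ ≤ β * t := mul_le_mul_of_nonpos_right hle h.le
    · simp [h, hU0]
    · -- t > 0 : U t / t ≤ β
      have hle : U t / t ≤ β := by
        refine ge_of_tendsto hslope' ?_
        filter_upwards [self_mem_nhdsWithin] with x (hx : x < 0)
        exact hsec x t (ne_of_lt hx) (ne_of_gt h) (by linarith)
      calc U t = (U t / t) * t := (div_mul_cancel₀ (U t) (ne_of_gt h)).symm
        _ ≤ β * t := mul_le_mul_of_nonneg_right hle h.le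
  -- V β = 0
  have hVβ0 : V β = 0 := by
    have h1 : (0:ℝ) ≤ V β := by
      have := hVβ.1 ⟨0, rfl⟩
      simpa [hU0] using this
    have h2 : V β ≤ 0 := by
      apply hVβ.2
      rintro _ ⟨x, rfl⟩
      show U x - x * β ≤ 0
      have h := hkey x
      have hc := mul_comm x β
      linarith
    linarith
  -- V nonneg at LUB points
  have hVnn : ∀ y > (0:ℝ), 0 ≤ V y := by
    intro y hy
    have := (hV y hy).1 ⟨0, rfl⟩
    simpa [hU0] using this
  -- convex combination inequality
  have hcomb : ∀ (u v tu tv : ℝ), IsLUB (Set.range fun x => U x - x * u) (V u) →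
      IsLUB (Set.range fun x => U x - x * v) (V v) →
      IsLUB (Set.range fun x => U x - x * (tu * u + tv * v)) (V (tu * u + tv * v)) →
      0 ≤ tu → 0 ≤ tv → tu + tv = 1 →
      V (tu * u + tv * v) ≤ tu * V u + tv * V v := by
    intro u v tu tv hu hv hp htu htv hsum
    apply hp.2
    rintro _ ⟨x, rfl⟩
    show U x - x * (tu * u + tv * v) ≤ tu * V u + tv * V v
    have h1 : U x - x * u ≤ V u := hu.1 ⟨x, rfl⟩
    have h2 : U x - x * v ≤ V v := hv.1 ⟨x, rfl⟩
    have hrw : U x - x * (tu * u + tv * v) = tu * (U x - x * u) + tv * (U x - x * v) := by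
      have htu1 : tu = 1 - tv := by linarith
      subst htu1; ring
    rw [hrw]
    have := mul_le_mul_of_nonneg_left h1 htu
    have := mul_le_mul_of_nonneg_left h2 htv
    linarith
  -- helper to get LUB at points > β or = β
  have hLUB : ∀ y : ℝ, β < y → IsLUB (Set.range fun x => U x - x * y) (V y) :=
    fun y hy => hV y (lt_of_le_of_lt hβ0 hy)
  -- monotone: β ≤ a ≤ b → V a ≤ V b
  have hVmono : ∀ a b : ℝ, β ≤ a → a ≤ b → V a ≤ V b := by
    intro a b hba hab
    rcases eq_or_lt_of_le hab with rfl | hab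
    · exact le_rfl
    rcases eq_or_lt_of_le hba with rfl | hba
    · rw [hVβ0]
      exact hVnn b (lt_of_le_of_lt hβ0 hab)
    · -- β < a < b
      have hbβ : β < b := hba.trans hab
      set s : ℝ := (b - a) / (b - β) with hs
      have hs0 : 0 ≤ s := div_nonneg (by linarith) (by linarith)
      have hs1 : s ≤ 1 := by
        rw [div_le_one (by linarith)]; linarith
      have hne : (0:ℝ) < b - β := by linarith
      have hsb : s * (b - β) = b - a := div_mul_cancel₀ _ (ne_of_gt hne)
      have ha : a = s * β + (1 - s) * b := by linear_combination hsb
      have hlubA : IsLUB (Set.range fun x => U x - x * (s * β + (1 - s) * b))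
          (V (s * β + (1 - s) * b)) := by rw [← ha]; exact hLUB a hba
      have hcb := hcomb β b s (1 - s) hVβ (hLUB b hbβ) hlubA hs0 (by linarith) (by ring)
      rw [← ha] at hcb
      have hVbnn := hVnn b (lt_of_le_of_lt hβ0 hbβ)
      calc V a ≤ s * V β + (1 - s) * V b := hcb
        _ = (1 - s) * V b := by rw [hVβ0]; ring
        _ ≤ V b := by nlinarith [mul_nonneg hs0 hVbnn]
  -- Φ nonneg
  have hΦnn : ∀ y ≥ (0:ℝ), 0 ≤ Φ y := by
    intro y hy
    show 0 ≤ if y ≤ β then 0 else V y - V β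
    split
    · exact le_rfl
    · rename_i h
      push_neg at h
      rw [hVβ0, sub_zero]
      exact hVnn y (lt_of_le_of_lt hβ0 h)
  -- Φ values
  have hΦeq : ∀ y, β < y → Φ y = V y := by
    intro y hy
    show (if y ≤ β then 0 else V y - V β) = V y
    rw [if_neg (not_le.2 hy), hVβ0, sub_zero]
  have hΦeq0 : ∀ y, y ≤ β → Φ y = 0 := fun y hy => if_pos hy
  -- the mixed case of convexity
  have hmix : ∀ a b ta tb : ℝ, a ≤ β → β < b → 0 ≤ ta → 0 ≤ tb → ta + tb = 1 →
      β < ta * a + tb * b → Φ (ta * a + tb * b) ≤ ta * Φ a + tb * Φ b := by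
    intro a b ta tb haβ hbβ hta htb hsum hc
    set c := ta * a + tb * b with hcdef
    have hc' : c ≤ ta * β + tb * b := by
      have := mul_le_mul_of_nonneg_left haβ hta
      simp only [hcdef]; linarith
    have hβc' : β < ta * β + tb * b := lt_of_lt_of_le hc hc'
    rw [hΦeq c hc, hΦeq0 a haβ, hΦeq b hbβ]
    have h1 : V c ≤ V (ta * β + tb * b) := hVmono c (ta * β + tb * b) hc.le hc'
    have h2 : V (ta * β + tb * b) ≤ ta * V β + tb * V b :=
      hcomb β b ta tb hVβ (hLUB b hbβ) (hLUB _ hβc') hta htb hsum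
    rw [hVβ0] at h2
    linarith
  refine ⟨?_, ?_, hΦnn, ?_, ?_⟩
  · -- convexity
    refine ⟨convex_Ici 0, ?_⟩
    intro a ha b hb ta tb hta htb hsum
    simp only [smul_eq_mul]
    by_cases hc : ta * a + tb * b ≤ β
    · rw [hΦeq0 _ hc]
      have h1 := mul_nonneg hta (hΦnn a ha)
      have h2 := mul_nonneg htb (hΦnn b hb)
      linarith
    · push_neg at hc
      by_cases haβ : a ≤ β
      · by_cases hbβ : b ≤ β
        · exfalso
          have h1 := mul_le_mul_of_nonneg_left haβ hta
          have h2 := mul_le_mul_of_nonneg_left hbβ htb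
          nlinarith
        · push_neg at hbβ
          exact hmix a b ta tb haβ hbβ hta htb hsum hc
      · push_neg at haβ
        by_cases hbβ : b ≤ β
        · have := hmix b a tb ta hbβ haβ htb hta (by linarith) (by linarith)
          have e : tb * b + ta * a = ta * a + tb * b := by ring
          rw [e] at this
          linarith
        · push_neg at hbβ
          rw [hΦeq _ hc, hΦeq a haβ, hΦeq b hbβ]
          exact hcomb a b ta tb (hLUB a haβ) (hLUB b hbβ) (hLUB _ hc) hta htb hsum
  · exact hΦeq0 0 hβ0
  · -- superlinear growth
    rw [tendsto_atTop]
    intro M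
    set x : ℝ := -(|M| + 1) with hxdef
    have hx0 : x < 0 := by
      rw [hxdef]; nlinarith [abs_nonneg M]
    have hUx : U x ≤ 0 := hU0 ▸ hmono hx0.le
    filter_upwards [eventually_ge_atTop (max (β + 1) (|U x| + 1))] with y hy
    have hyβ : β < y := by
      have := le_trans (le_max_left (β + 1) (|U x| + 1)) hy
      linarith
    have hy1 : |U x| + 1 ≤ y := le_trans (le_max_right _ _) hy
    have hy0 : 0 < y := by nlinarith [abs_nonneg (U x)]
    rw [hΦeq y hyβ, le_div_iff₀ hy0]
    have hVy : U x - x * y ≤ V y := (hLUB y hyβ).1 ⟨x, rfl⟩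
    have h1 : -y ≤ U x := by
      have := neg_abs_le (U x)
      linarith
    have hMabs := mul_le_mul_of_nonneg_right (le_abs_self M) hy0.le
    have hxy : x * y = -(|M| + 1) * y := by rw [hxdef]
    nlinarith
  · -- Δ₂
    obtain ⟨C, y2, hC⟩ := hΔ2V
    refine ⟨C, max y2 (β + 1), ?_⟩
    intro t ht
    have ht2 : t ≥ y2 := le_trans (le_max_left _ _) ht
    have htβ : β < t := by
      have := le_trans (le_max_right _ _) ht
      linarith
    have ht2β : β < 2 * t := by
      have ht0 : 0 < t := lt_of_le_of_lt hβ0 htβ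
      linarith
    rw [hΦeq _ ht2β, hΦeq _ htβ]
    exact hC t ht2
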